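/- With the notation of the previous Euler characteristic setup, χ(S') − χ(S) = (e−1)χ(S) + Σ_{1≤k<e} (k−e)s_k. Consequently, if χ(S) < 0 and χ(S') = χ(S), then e = 1. -/
import Mathlib


/-- With the notation of the Euler characteristic setup of Statement 7
(`χ(S) = χ(S_e) + ∑_{1≤k<e} s_k`, `χ(S') = e·χ(S_e) + ∑_{1≤k<e} k·s_k`, with the
`s_k` nonnegative cardinalities and `e ≥ 1`), one has
`χ(S') − χ(S) = (e−1)·χ(S) + ∑_{1≤k<e} (k−e)·s_k`.
Consequently, if `χ(S) < 0` and `χ(S') = χ(S)`, then `e = 1`. -/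
theorem stmt_8 (e : ℕ) (he : 1 ≤ e) (s : ℕ → ℕ)
    (χS χS' χSe : ℤ)
    (hS : χS = χSe + ∑ k ∈ Finset.Ico 1 e, (s k : ℤ))
    (hS' : χS' = (e : ℤ) * χSe + ∑ k ∈ Finset.Ico 1 e, (k : ℤ) * (s k : ℤ)) :
    χS' - χS = ((e : ℤ) - 1) * χS + ∑ k ∈ Finset.Ico 1 e, ((k : ℤ) - (e : ℤ)) * (s k : ℤ) ∧
    (χS < 0 → χS' = χS → e = 1) := by
  have key : χS' - χS = ((e : ℤ) - 1) * χS +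
      ∑ k ∈ Finset.Ico 1 e, ((k : ℤ) - (e : ℤ)) * (s k : ℤ) := by
    subst hS hS'
    simp only [sub_mul, mul_add, Finset.mul_sum, Finset.sum_sub_distrib, one_mul]
    ring
  refine ⟨key, fun hneg heq => ?_⟩
  by_contra h
  have h2 : 2 ≤ e := by omega
  have hsum : ∑ k ∈ Finset.Ico 1 e, ((k : ℤ) - (e : ℤ)) * (s k : ℤ) ≤ 0 := by
    apply Finset.sum_nonpos
    intro k hk
    rw [Finset.mem_Ico] at hk
    have : (k : ℤ) - e ≤ 0 := by omega
    exact mul_nonpos_of_nonpos_of_nonneg this (by positivity)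
  have hmul : ((e : ℤ) - 1) * χS < 0 := by
    apply mul_neg_of_pos_of_neg _ hneg
    omega
  omega
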